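/- arXiv:2506.20191 — 3 statements merged into one kernel-verified Lean document; each statement's English description precedes it below -/
import Mathlib

section
/- Let A, B be real symmetric positive definite matrices and ε ∈ (0,1) with (1−ε)A ⪯ B ⪯ (1+ε)A. Then the spectral norm of log B − log A is at most |log(1−ε)|. -/
/-!
Operator monotonicity of the logarithm is available in complex C⋆-algebras, so `A` and `B` are
first embedded into complex matrices; the embedding is a star-algebra map, hence preserves the
Loewner order and commutes with the functional calculus, and it does not decrease the operator
norm. There `(1-ε)A ⪯ B ⪯ (1+ε)A` and `log (c • A) = log c + log A` trap `log B - log A` between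
`log (1-ε)` and `log (1+ε)`, so its norm is at most `max |log (1-ε)| |log (1+ε)| = |log (1-ε)|`.
-/

open scoped Matrix.Norms.L2Operator MatrixOrder
open Matrix

lemma Real.abs_log_one_add_le_abs_log_one_sub {ε : ℝ} (hε₀ : 0 ≤ ε) (hε₁ : ε < 1) :
    |Real.log (1 + ε)| ≤ |Real.log (1 - ε)| := by
  have hprod : Real.log (1 + ε) + Real.log (1 - ε) ≤ 0 := by
    rw [← Real.log_mul (by linarith) (by linarith)]
    exact Real.log_nonpos (by nlinarith) (by nlinarith)
  rw [abs_of_nonneg (Real.log_nonneg (by linarith)),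
    abs_of_nonpos (Real.log_nonpos (by linarith) (by linarith))]
  linarith

lemma IsStrictlyPositive.map {F R S : Type*} [Semiring R] [PartialOrder R] [StarRing R]
    [StarOrderedRing R] [Semiring S] [PartialOrder S] [StarRing S] [StarOrderedRing S]
    [FunLike F R S] [RingHomClass F R S] [NonUnitalStarRingHomClass F R S] {a : R}
    (ha : IsStrictlyPositive a) (φ : F) : IsStrictlyPositive (φ a) :=
  (ha.isUnit.map φ).isStrictlyPositive (map_nonneg φ ha.nonneg)

section CStarAlgebra

variable {A : Type*} [CStarAlgebra A] [PartialOrder A] [StarOrderedRing A]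

lemma IsSelfAdjoint.norm_le_of_neg_algebraMap_le_of_le_algebraMap {a : A} {r : ℝ} (hr : 0 ≤ r)
    (ha : IsSelfAdjoint a) (h₁ : -algebraMap ℝ A r ≤ a) (h₂ : a ≤ algebraMap ℝ A r) :
    ‖a‖ ≤ r := by
  rw [← map_neg] at h₁
  rw [← cfc_id' ℝ a]
  refine norm_cfc_le hr fun x hx => abs_le.mpr ⟨?_, ?_⟩
  · exact (algebraMap_le_iff_le_spectrum ha).mp h₁ x hx
  · exact (le_algebraMap_iff_spectrum_le ha).mp h₂ x hx

namespace CFC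

lemma algebraMap_log_le_log_sub_log {a b : A} {s : ℝ} (hs : 0 < s)
    (ha : IsStrictlyPositive a) (hab : s • a ≤ b) :
    algebraMap ℝ A (Real.log s) ≤ log b - log a := by
  have hlog := log_le_log hab
  rw [log_smul' a hs] at hlog
  exact le_sub_right_of_add_le hlog

lemma log_sub_log_le_algebraMap {a b : A} {t : ℝ} (ht : 0 < t)
    (ha : IsStrictlyPositive a) (hb : IsStrictlyPositive b) (hba : b ≤ t • a) :
    log b - log a ≤ algebraMap ℝ A (Real.log t) := by
  have hlog := log_le_log hba
  rw [log_smul' a ht] at hlog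
  exact sub_le_iff_le_add.mpr hlog

lemma norm_log_sub_log_le {a b : A} {s t : ℝ} (hs : 0 < s) (ht : 0 < t)
    (ha : IsStrictlyPositive a) (hab : s • a ≤ b) (hba : b ≤ t • a) :
    ‖log b - log a‖ ≤ max |Real.log s| |Real.log t| := by
  have hb : IsStrictlyPositive b := (ha.smul hs).of_le hab
  have hlower := algebraMap_log_le_log_sub_log hs ha hab
  have hupper := log_sub_log_le_algebraMap ht ha hb hba
  have hsa : IsSelfAdjoint (log b - log a) := .sub .log .log
  refine hsa.norm_le_of_neg_algebraMap_le_of_le_algebraMap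
    (le_max_of_le_left (by positivity)) ?_ ?_
  · refine le_trans ?_ hlower
    rw [← map_neg]
    exact algebraMap_mono A (neg_le.mp ((neg_le_abs _).trans (le_max_left _ _)))
  · exact hupper.trans (algebraMap_mono A ((le_abs_self _).trans (le_max_right _ _)))

end CFC

end CStarAlgebra

lemma EuclideanSpace.norm_toLp_ofReal {ι : Type*} [Fintype ι] (x : ι → ℝ) :
    ‖WithLp.toLp 2 (fun i => (x i : ℂ))‖ = ‖WithLp.toLp 2 x‖ := by
  simp [EuclideanSpace.norm_eq]

namespace Matrix

variable {ι : Type*} [Fintype ι] [DecidableEq ι]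

noncomputable def ofRealStarAlgHom : Matrix ι ι ℝ →⋆ₐ[ℝ] Matrix ι ι ℂ :=
  { Complex.ofRealAm.mapMatrix with
    map_star' := fun M => by
      ext i j
      simp }

lemma ofRealStarAlgHom_mulVec (M : Matrix ι ι ℝ) (v : ι → ℝ) :
    ofRealStarAlgHom M *ᵥ (fun i => (v i : ℂ)) = fun i => ((M *ᵥ v) i : ℂ) := by
  ext i
  simp [ofRealStarAlgHom, mulVec, dotProduct]

@[fun_prop]
lemma continuous_ofRealStarAlgHom : Continuous (ofRealStarAlgHom (ι := ι)) :=
  continuous_id.matrix_map Complex.continuous_ofReal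

lemma ofRealStarAlgHom_cfc {A : Matrix ι ι ℝ} (hA : A.IsHermitian) (f : ℝ → ℝ) :
    ofRealStarAlgHom (hA.cfc f) = cfc f (ofRealStarAlgHom A) := by
  rw [← hA.cfc_eq]
  exact StarAlgHom.map_cfc _ _ _ (A.finite_real_spectrum.continuousOn f)

lemma norm_le_norm_ofRealStarAlgHom (M : Matrix ι ι ℝ) : ‖M‖ ≤ ‖ofRealStarAlgHom M‖ := by
  rw [cstar_norm_def M]
  refine ContinuousLinearMap.opNorm_le_bound _ (norm_nonneg _) fun v => ?_
  let w : EuclideanSpace ℂ ι := WithLp.toLp 2 fun i => (v i : ℂ)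
  calc ‖toEuclideanCLM (𝕜 := ℝ) M v‖ = ‖toEuclideanCLM (𝕜 := ℂ) (ofRealStarAlgHom M) w‖ := by
        rw [toEuclideanCLM_toLp, ← EuclideanSpace.norm_toLp_ofReal, ← ofRealStarAlgHom_mulVec,
          ← toEuclideanCLM_toLp]
    _ ≤ ‖ofRealStarAlgHom M‖ * ‖w‖ := ContinuousLinearMap.le_opNorm _ _
    _ = ‖ofRealStarAlgHom M‖ * ‖v‖ := by rw [EuclideanSpace.norm_toLp_ofReal, v.toLp_ofLp]

end Matrix

/-- If `A`, `B` are symmetric positive definite with `(1−ε)A ⪯ B ⪯ (1+ε)A` for `ε ∈ (0,1)`,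
then the spectral norm of `log B − log A` is at most `|log(1−ε)|`. -/
theorem stmt3 {n : ℕ} (A B : Matrix (Fin n) (Fin n) ℝ) (hA : A.PosDef) (hB : B.PosDef)
    (ε : ℝ) (hε : ε ∈ Set.Ioo (0 : ℝ) 1)
    (h1 : (B - (1 - ε) • A).PosSemidef) (h2 : ((1 + ε) • A - B).PosSemidef) :
    ‖Matrix.toEuclideanCLM (𝕜 := ℝ) (hB.1.cfc Real.log - hA.1.cfc Real.log)‖
      ≤ |Real.log (1 - ε)| := by
  obtain ⟨hε₀, hε₁⟩ := hε
  let φ := ofRealStarAlgHom (ι := Fin n)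
  have hlower : (1 - ε) • φ A ≤ φ B := by
    simpa only [map_smul] using OrderHomClass.mono φ (le_iff.mpr h1)
  have hupper : φ B ≤ (1 + ε) • φ A := by
    simpa only [map_smul] using OrderHomClass.mono φ (le_iff.mpr h2)
  calc ‖toEuclideanCLM (𝕜 := ℝ) (hB.1.cfc Real.log - hA.1.cfc Real.log)‖
      ≤ ‖φ (hB.1.cfc Real.log - hA.1.cfc Real.log)‖ := norm_le_norm_ofRealStarAlgHom _
    _ = ‖CFC.log (φ B) - CFC.log (φ A)‖ := by
      rw [map_sub, ofRealStarAlgHom_cfc, ofRealStarAlgHom_cfc, CFC.log, CFC.log]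
    _ ≤ max |Real.log (1 - ε)| |Real.log (1 + ε)| :=
      CFC.norm_log_sub_log_le (by linarith) (by linarith) (hA.isStrictlyPositive.map φ)
        hlower hupper
    _ = |Real.log (1 - ε)| := max_eq_left (Real.abs_log_one_add_le_abs_log_one_sub hε₀.le hε₁)
end

section
/- Let Q = P Pᵀ where P ∈ {0,1}^{L×M} has exactly one 1 in each row. Then X* := Q is feasible for the SDP {maximize Tr(QX) subject to diag(X)=1_L, X ⪰ 0} and attains the optimal value 1ᵀ Q 1; moreover any feasible X is optimal if and only if X_{kl} = 1 whenever Q_{kl} = 1. -/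
open Matrix

/-!
Write `Q = P Pᵀ`. Since the rows of `P` are standard basis vectors, `Q k l = 1` if rows `k` and
`l` of `P` coincide and `0` otherwise; in particular `Q` is a PSD 0/1 matrix with unit diagonal.
For feasible `X`, testing `X ⪰ 0` against `e_k - e_l` gives `X k l ≤ 1`, so
`Tr(QX) = ∑ Q k l X l k ≤ ∑ Q k l = 1ᵀ Q 1`, with equality exactly when `X l k = 1` on the
support of `Q`. Taking `X = Q` shows that `Q` attains the bound.
-/

namespace Matrix

variable {n : Type*} [Fintype n]

theorem PosSemidef.two_mul_apply_le_add_diag {X : Matrix n n ℝ} (hX : X.PosSemidef) (i j : n) :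
    2 * X i j ≤ X i i + X j j := by
  classical
  have hsymm : X j i = X i j := by simpa using hX.1.apply i j
  have h := hX.dotProduct_mulVec_nonneg (Pi.single i 1 - Pi.single j 1)
  simp [mulVec_sub, dotProduct_sub, sub_dotProduct, mulVec_single, hsymm] at h
  linarith

theorem trace_mul_le_sum_of_nonneg_of_le_one {Q X : Matrix n n ℝ} (hQ : ∀ i j, 0 ≤ Q i j)
    (hX : ∀ i j, X i j ≤ 1) : (Q * X).trace ≤ ∑ i, ∑ j, Q i j := by
  simp only [trace, diag, mul_apply]
  gcongr with i _ j _
  exact mul_le_of_le_one_right (hQ i j) (hX j i)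

theorem trace_mul_eq_sum_iff_of_nonneg_of_le_one {Q X : Matrix n n ℝ} (hQ : ∀ i j, 0 ≤ Q i j)
    (hX : ∀ i j, X i j ≤ 1) :
    (Q * X).trace = ∑ i, ∑ j, Q i j ↔ ∀ i j, Q i j ≠ 0 → X j i = 1 := by
  have hterm (i j : n) : Q i j * X j i ≤ Q i j := mul_le_of_le_one_right (hQ i j) (hX j i)
  simp only [trace, diag, mul_apply]
  rw [Finset.sum_eq_sum_iff_of_le fun i _ => Finset.sum_le_sum fun j _ => hterm i j]
  simp only [Finset.sum_eq_sum_iff_of_le fun j _ => hterm _ j, Finset.mem_univ, true_implies]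
  exact forall₂_congr fun i j => ⟨fun h hQij => (mul_eq_left₀ hQij).1 h,
    fun h => (eq_or_ne (Q i j) 0).elim (fun h0 => by simp [h0]) fun hQij => by simp [h hQij]⟩

end Matrix

theorem mul_transpose_apply_of_apply_eq_ite {L M : Type*} [Fintype M] [DecidableEq M]
    {P : Matrix L M ℝ} {f : L → M} (hP : ∀ k m, P k m = if m = f k then 1 else 0) (k l : L) :
    (P * Pᵀ) k l = if f k = f l then 1 else 0 := by
  simp [mul_apply, hP, Finset.sum_ite_eq', eq_comm]

/-- With `Q = P Pᵀ` for a 0/1 matrix `P` having exactly one 1 per row: `Q` is feasible for the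
SDP (unit diagonal, PSD), attains the value `1ᵀ Q 1`, this value bounds `Tr(QX)` over all
feasible `X`, and a feasible `X` is optimal iff `X_{kl} = 1` whenever `Q_{kl} = 1`. -/
theorem stmt5 {L M : ℕ} (P : Matrix (Fin L) (Fin M) ℝ)
    (hP : ∀ k, ∃ m, ∀ m', P k m' = if m' = m then 1 else 0) :
    (∀ k, (P * Pᵀ) k k = 1) ∧ (P * Pᵀ).PosSemidef ∧
    ((P * Pᵀ) * (P * Pᵀ)).trace = (1 : Fin L → ℝ) ⬝ᵥ (P * Pᵀ) *ᵥ (1 : Fin L → ℝ) ∧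
    ∀ X : Matrix (Fin L) (Fin L) ℝ, X.PosSemidef → (∀ k, X k k = 1) →
      (((P * Pᵀ) * X).trace ≤ (1 : Fin L → ℝ) ⬝ᵥ (P * Pᵀ) *ᵥ (1 : Fin L → ℝ) ∧
       (((P * Pᵀ) * X).trace = (1 : Fin L → ℝ) ⬝ᵥ (P * Pᵀ) *ᵥ (1 : Fin L → ℝ) ↔
         ∀ k l, (P * Pᵀ) k l = 1 → X k l = 1)) := by
  choose f hf using hP
  have hQ := mul_transpose_apply_of_apply_eq_ite hf
  have hQ_nonneg (k l : Fin L) : 0 ≤ (P * Pᵀ) k l := by rw [hQ]; split_ifs <;> norm_num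
  have hdiag (k : Fin L) : (P * Pᵀ) k k = 1 := by simp [hQ]
  have hpsd : (P * Pᵀ).PosSemidef := by simpa using posSemidef_self_mul_conjTranspose P
  have hoptimal (X : Matrix (Fin L) (Fin L) ℝ) (hX : X.PosSemidef) (hd : ∀ k, X k k = 1) :
      ((P * Pᵀ) * X).trace ≤ (1 : Fin L → ℝ) ⬝ᵥ (P * Pᵀ) *ᵥ (1 : Fin L → ℝ) ∧
      (((P * Pᵀ) * X).trace = (1 : Fin L → ℝ) ⬝ᵥ (P * Pᵀ) *ᵥ (1 : Fin L → ℝ) ↔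
        ∀ k l, (P * Pᵀ) k l = 1 → X k l = 1) := by
    have hX1 (k l : Fin L) : X k l ≤ 1 := by
      linarith [hX.two_mul_apply_le_add_diag k l, hd k, hd l]
    have hsum : (1 : Fin L → ℝ) ⬝ᵥ (P * Pᵀ) *ᵥ 1 = ∑ k, ∑ l, (P * Pᵀ) k l := by
      simp [mulVec, dotProduct]
    rw [hsum]
    refine ⟨trace_mul_le_sum_of_nonneg_of_le_one hQ_nonneg hX1,
      (trace_mul_eq_sum_iff_of_nonneg_of_le_one hQ_nonneg hX1).trans ?_⟩
    have hsupport (k l : Fin L) : (P * Pᵀ) k l ≠ 0 ↔ (P * Pᵀ) l k = 1 := by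
      rw [hQ, hQ]
      by_cases h : f k = f l <;> simp [h, Ne.symm]
    simp only [hsupport]
    exact forall_comm
  exact ⟨hdiag, hpsd, (hoptimal _ hpsd hdiag).2.2 fun _ _ h => h, hoptimal⟩
end

section
/- Fix a partition I_1,…,I_M of {1,…,L} with |I_m| = L_m, and let Q be the 0/1 matrix with Q_{kl} = 1 iff k,l lie in the same I_m. The unique minimizer of the von Neumann entropy S(X) = Tr(X log X) − Tr(X) over symmetric PSD matrices X with X_{I_m,I_m} = 1_{L_m} 1_{L_m}ᵀ for all m is X = Q itself. -/
/-!
Both traces equal `L`, and `Tr(A log A) = ∑ λ log λ` over the eigenvalues of `A`. If `A` is PSD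
and all-ones on the fibre blocks, then `(e_j - e_l)ᵀ A (e_j - e_l) = 0` for `j, l` in a common
fibre, so `A (e_j - e_l) = 0`: `A` is constant on fibre blocks, and so is every eigenvector with
nonzero eigenvalue. Let `u_m = 1_{I_m} / √L_m` and `(v_i)` be an orthonormal eigenbasis. The weights
`w_{im} = ⟨v_i, u_m⟩²` sum to `1` over `i` (Parseval), and over `m` whenever `λ_i ≠ 0`, while
`∑_i w_{im} λ_i = u_mᵀ A u_m = L_m`. Jensen for `x log x` in each column `m` gives
`∑_m L_m log L_m ≤ ∑_i λ_i log λ_i`, with equality iff `λ_i = L_m` whenever `w_{im} ≠ 0`, that is,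
iff `A 1_{I_m} = L_m 1_{I_m}` for every `m`. The matrix `Q` has this property, and for `X` it
determines every entry.
-/

open Matrix Finset Real

namespace Matrix

variable {n : Type*} [Fintype n]

namespace IsHermitian

variable [DecidableEq n] {A : Matrix n n ℝ}

lemma trace_cfc (hA : A.IsHermitian) (f : ℝ → ℝ) :
    (hA.cfc f).trace = ∑ i, f (hA.eigenvalues i) := by
  rw [IsHermitian.cfc, Unitary.conjStarAlgAut_apply, trace_mul_cycle, Unitary.coe_star_mul_self,
    one_mul, trace_diagonal]
  rfl

lemma mul_cfc (hA : A.IsHermitian) (f : ℝ → ℝ) : A * hA.cfc f = hA.cfc (fun x => x * f x) := by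
  have hfin := A.finite_real_spectrum
  rw [← hA.cfc_eq, ← hA.cfc_eq, cfc_mul _ _ A (hfin.continuousOn _) (hfin.continuousOn _),
    cfc_id' ℝ A]

lemma trace_mul_cfc (hA : A.IsHermitian) (f : ℝ → ℝ) :
    (A * hA.cfc f).trace = ∑ i, hA.eigenvalues i * f (hA.eigenvalues i) := by
  rw [hA.mul_cfc, hA.trace_cfc]

lemma sum_dotProduct_eigenvectorBasis_mul (hA : A.IsHermitian) (x y : n → ℝ) :
    ∑ i, (x ⬝ᵥ hA.eigenvectorBasis i) * (hA.eigenvectorBasis i ⬝ᵥ y) = x ⬝ᵥ y := by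
  simpa [EuclideanSpace.inner_eq_star_dotProduct, dotProduct_comm, mul_comm] using
    hA.eigenvectorBasis.sum_inner_mul_inner (WithLp.toLp 2 x) (WithLp.toLp 2 y)

lemma eigenvectorBasis_dotProduct_self (hA : A.IsHermitian) (i : n) :
    hA.eigenvectorBasis i ⬝ᵥ hA.eigenvectorBasis i = 1 := by
  have h := orthonormal_iff_ite.mp hA.eigenvectorBasis.orthonormal i i
  rwa [EuclideanSpace.inner_eq_star_dotProduct, star_trivial, if_pos rfl] at h

lemma eigenvectorBasis_dotProduct_mulVec (hA : A.IsHermitian) (i : n) (y : n → ℝ) :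
    hA.eigenvectorBasis i ⬝ᵥ A *ᵥ y = hA.eigenvalues i * (hA.eigenvectorBasis i ⬝ᵥ y) := by
  rw [dotProduct_mulVec, ← mulVec_transpose, ← conjTranspose_eq_transpose_of_trivial, hA.eq,
    hA.mulVec_eigenvectorBasis, smul_dotProduct, smul_eq_mul]

lemma dotProduct_mulVec_eq_sum (hA : A.IsHermitian) (x y : n → ℝ) :
    x ⬝ᵥ A *ᵥ y = ∑ i, hA.eigenvalues i *
      ((x ⬝ᵥ hA.eigenvectorBasis i) * (hA.eigenvectorBasis i ⬝ᵥ y)) := by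
  rw [← hA.sum_dotProduct_eigenvectorBasis_mul]
  simp_rw [hA.eigenvectorBasis_dotProduct_mulVec]
  exact Finset.sum_congr rfl fun i _ => by ring

lemma mulVec_eq_smul_iff (hA : A.IsHermitian) (x : n → ℝ) (c : ℝ) :
    A *ᵥ x = c • x ↔ ∀ i, hA.eigenvectorBasis i ⬝ᵥ x ≠ 0 → hA.eigenvalues i = c := by
  constructor
  · intro hx i hi
    have h := hA.eigenvectorBasis_dotProduct_mulVec i x
    rw [hx, dotProduct_smul, smul_eq_mul] at h
    exact (mul_right_cancel₀ hi h).symm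
  · intro hc
    refine dotProduct_eq _ _ fun y => ?_
    rw [dotProduct_comm, hA.dotProduct_mulVec_eq_sum, dotProduct_comm, dotProduct_smul,
      smul_eq_mul, ← hA.sum_dotProduct_eigenvectorBasis_mul, Finset.mul_sum]
    refine Finset.sum_congr rfl fun i _ => ?_
    rcases eq_or_ne (hA.eigenvectorBasis i ⬝ᵥ x) 0 with h | h
    · simp [h]
    · rw [hc i h]

end IsHermitian

namespace PosSemidef

variable {A : Matrix n n ℝ}

lemma apply_eq_apply_of_apply_eq (hA : A.PosSemidef) {j l : n} (hj : A j j = A j l)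
    (hl : A l l = A l j) (k : n) : A k j = A k l := by
  classical
  have hzero := (hA.dotProduct_mulVec_zero_iff (Pi.single j 1 - Pi.single l 1)).mp (by
    simp [mulVec_sub, sub_dotProduct, dotProduct_sub, hj, hl])
  simpa [mulVec_sub, sub_eq_zero] using congrFun hzero k

variable {ι : Type*} {r : n → ι}

lemma row_factorsThrough (hA : A.PosSemidef) (hA1 : ∀ k l, r k = r l → A k l = 1) (k : n) :
    (A k).FactorsThrough r := fun l l' h =>
  hA.apply_eq_apply_of_apply_eq (by rw [hA1 _ _ rfl, hA1 _ _ h])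
    (by rw [hA1 _ _ rfl, hA1 _ _ h.symm]) k

lemma mulVec_factorsThrough (hA : A.PosSemidef) (hA1 : ∀ k l, r k = r l → A k l = 1)
    (v : n → ℝ) : (A *ᵥ v).FactorsThrough r := fun k k' h => by
  simp only [mulVec, dotProduct]
  refine Finset.sum_congr rfl fun l _ => ?_
  rw [← hA.1.apply k l, ← hA.1.apply k' l, hA.row_factorsThrough hA1 l h]

end PosSemidef

end Matrix

namespace Real

variable {n ι : Type*} [Fintype n] [Fintype ι] {lam : n → ℝ} {d : ι → ℝ} {w : n → ι → ℝ}

lemma sum_mul_log_eq_sum_sum_weights (hrow : ∀ i, lam i ≠ 0 → ∑ m, w i m = 1) :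
    ∑ i, lam i * log (lam i) = ∑ m, ∑ i, w i m * (lam i * log (lam i)) := by
  rw [Finset.sum_comm]
  refine Finset.sum_congr rfl fun i _ => ?_
  rw [← Finset.sum_mul]
  rcases eq_or_ne (lam i) 0 with h | h
  · simp [h]
  · rw [hrow i h, one_mul]

lemma sum_mul_log_le_of_weights (hlam : ∀ i, 0 ≤ lam i) (hw : ∀ i m, 0 ≤ w i m)
    (hcol : ∀ m, ∑ i, w i m = 1) (hmean : ∀ m, ∑ i, w i m * lam i = d m)
    (hrow : ∀ i, lam i ≠ 0 → ∑ m, w i m = 1) :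
    ∑ m, d m * log (d m) ≤ ∑ i, lam i * log (lam i) := by
  rw [sum_mul_log_eq_sum_sum_weights hrow]
  refine Finset.sum_le_sum fun m _ => ?_
  simpa [← hmean m] using convexOn_mul_log.map_sum_le (fun i _ => hw i m) (hcol m)
    (fun i _ => Set.mem_Ici.mpr (hlam i))

lemma sum_mul_log_eq_iff_of_weights (hlam : ∀ i, 0 ≤ lam i) (hw : ∀ i m, 0 ≤ w i m)
    (hcol : ∀ m, ∑ i, w i m = 1) (hmean : ∀ m, ∑ i, w i m * lam i = d m)
    (hrow : ∀ i, lam i ≠ 0 → ∑ m, w i m = 1) :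
    ∑ i, lam i * log (lam i) = ∑ m, d m * log (d m) ↔ ∀ i m, w i m ≠ 0 → lam i = d m := by
  have jensen (m : ι) := convexOn_mul_log.map_sum_le (fun i _ => hw i m) (hcol m)
    (fun i _ => Set.mem_Ici.mpr (hlam i))
  have jensen_eq (m : ι) := strictConvexOn_mul_log.map_sum_eq_iff' (fun i _ => hw i m)
    (hcol m) (fun i _ => Set.mem_Ici.mpr (hlam i))
  simp only [smul_eq_mul, hmean, Finset.mem_univ, true_implies] at jensen jensen_eq
  rw [sum_mul_log_eq_sum_sum_weights hrow, eq_comm,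
    Finset.sum_eq_sum_iff_of_le fun m _ => jensen m, forall_comm]
  simp only [Finset.mem_univ, true_implies, jensen_eq]

end Real

section Fibers

variable {n ι : Type*} [Fintype n] [DecidableEq ι] {r : n → ι}

variable (r) in
def fiberIndicator (m : ι) : n → ℝ := fun k => if r k = m then 1 else 0

variable (r) in
def fiberCard (m : ι) : ℝ := #{k | r k = m}

lemma fiberCard_apply_pos (k : n) : 0 < fiberCard r (r k) := by
  unfold fiberCard
  exact_mod_cast Finset.card_pos.mpr ⟨k, by simp⟩

lemma fiberCard_pos (hr : Function.Surjective r) (m : ι) : 0 < fiberCard r m := by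
  obtain ⟨k, rfl⟩ := hr m
  exact fiberCard_apply_pos k

lemma dotProduct_fiberIndicator (v : n → ℝ) (m : ι) :
    v ⬝ᵥ fiberIndicator r m = ∑ k with r k = m, v k := by
  simp [dotProduct, fiberIndicator, Finset.sum_filter]

lemma fiberIndicator_dotProduct_self (m : ι) :
    fiberIndicator r m ⬝ᵥ fiberIndicator r m = fiberCard r m := by
  rw [dotProduct_fiberIndicator, fiberCard, Finset.card_eq_sum_ones, Nat.cast_sum]
  exact Finset.sum_congr rfl fun k hk => by simp [fiberIndicator, (Finset.mem_filter.mp hk).2]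

lemma dotProduct_fiberIndicator_of_factorsThrough {v : n → ℝ} (hv : v.FactorsThrough r)
    (k : n) : v ⬝ᵥ fiberIndicator r (r k) = fiberCard r (r k) * v k := by
  rw [dotProduct_fiberIndicator, Finset.sum_congr rfl fun l hl => hv (Finset.mem_filter.mp hl).2,
    Finset.sum_const, nsmul_eq_mul, fiberCard]

lemma sum_sq_dotProduct_fiberIndicator_div [Fintype ι] {v : n → ℝ} (hv : v.FactorsThrough r) :
    ∑ m, (v ⬝ᵥ fiberIndicator r m) ^ 2 / fiberCard r m = v ⬝ᵥ v := by
  have hsum (k : n) : ∑ m, fiberIndicator r m k * ((v ⬝ᵥ fiberIndicator r m) / fiberCard r m)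
      = v k := by
    simp [fiberIndicator, dotProduct_fiberIndicator_of_factorsThrough hv,
      (fiberCard_apply_pos k).ne']
  calc ∑ m, (v ⬝ᵥ fiberIndicator r m) ^ 2 / fiberCard r m
      = ∑ k, v k * ∑ m, fiberIndicator r m k * ((v ⬝ᵥ fiberIndicator r m) / fiberCard r m) := by
        simp_rw [Finset.mul_sum]
        rw [Finset.sum_comm]
        refine Finset.sum_congr rfl fun m _ => ?_
        rw [sq, mul_div_assoc, dotProduct, Finset.sum_mul]
        exact Finset.sum_congr rfl fun k _ => by ring
    _ = v ⬝ᵥ v := by simp_rw [hsum]; rfl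

variable {A : Matrix n n ℝ}

lemma mulVec_fiberIndicator_apply_of_eq (hA1 : ∀ k l, r k = r l → A k l = 1) {k : n} {m : ι}
    (hk : r k = m) : (A *ᵥ fiberIndicator r m) k = fiberCard r m := by
  subst hk
  rw [mulVec, dotProduct_fiberIndicator, fiberCard, Finset.card_eq_sum_ones, Nat.cast_sum]
  exact Finset.sum_congr rfl fun l hl => by simpa using hA1 k l (Finset.mem_filter.mp hl).2.symm

lemma fiberIndicator_dotProduct_mulVec (hA1 : ∀ k l, r k = r l → A k l = 1) (m : ι) :
    fiberIndicator r m ⬝ᵥ A *ᵥ fiberIndicator r m = fiberCard r m ^ 2 := by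
  rw [dotProduct_comm, dotProduct_fiberIndicator, Finset.sum_congr rfl fun k hk =>
      mulVec_fiberIndicator_apply_of_eq hA1 (Finset.mem_filter.mp hk).2,
    Finset.sum_const, nsmul_eq_mul, fiberCard, sq]

lemma mulVec_fiberIndicator_of_apply_eq_ite (hA : ∀ k l, A k l = if r k = r l then 1 else 0)
    (m : ι) : A *ᵥ fiberIndicator r m = fiberCard r m • fiberIndicator r m := by
  ext k
  by_cases hk : r k = m
  · rw [mulVec_fiberIndicator_apply_of_eq (fun k l h => by simp [hA, h]) hk]
    simp [fiberIndicator, hk]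
  · simp only [mulVec, dotProduct, fiberIndicator, hA, hk, Pi.smul_apply, ite_mul, one_mul,
      zero_mul, if_false, smul_zero]
    exact Finset.sum_eq_zero fun l _ => by grind

lemma Matrix.PosSemidef.apply_eq_ite_of_mulVec_fiberIndicator (hA : A.PosSemidef)
    (hA1 : ∀ k l, r k = r l → A k l = 1)
    (hF : ∀ m, A *ᵥ fiberIndicator r m = fiberCard r m • fiberIndicator r m) (k l : n) :
    A k l = if r k = r l then 1 else 0 := by
  have h : A k ⬝ᵥ fiberIndicator r (r l) = fiberCard r (r l) * fiberIndicator r (r l) k :=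
    congrFun (hF (r l)) k
  rw [dotProduct_fiberIndicator_of_factorsThrough (hA.row_factorsThrough hA1 k)] at h
  exact mul_left_cancel₀ (fiberCard_apply_pos l).ne' (by simpa [fiberIndicator] using h)

variable [DecidableEq n]

noncomputable def fiberWeight (r : n → ι) (hA : A.IsHermitian) (i : n) (m : ι) : ℝ :=
  (hA.eigenvectorBasis i ⬝ᵥ fiberIndicator r m) ^ 2 / fiberCard r m

lemma fiberWeight_nonneg (hA : A.IsHermitian) (hr : Function.Surjective r) (i : n) (m : ι) :
    0 ≤ fiberWeight r hA i m :=
  div_nonneg (sq_nonneg _) (fiberCard_pos hr m).le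

lemma fiberWeight_ne_zero_iff (hA : A.IsHermitian) (hr : Function.Surjective r) (i : n) (m : ι) :
    fiberWeight r hA i m ≠ 0 ↔ hA.eigenvectorBasis i ⬝ᵥ fiberIndicator r m ≠ 0 := by
  simp [fiberWeight, (fiberCard_pos hr m).ne']

lemma sum_fiberWeight_eq_one (hA : A.IsHermitian) (hr : Function.Surjective r) (m : ι) :
    ∑ i, fiberWeight r hA i m = 1 := by
  have h := hA.sum_dotProduct_eigenvectorBasis_mul (fiberIndicator r m) (fiberIndicator r m)
  simp_rw [fiberIndicator_dotProduct_self, dotProduct_comm (fiberIndicator r m)] at h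
  simp_rw [fiberWeight, ← Finset.sum_div, sq, h, div_self (fiberCard_pos hr m).ne']

lemma sum_fiberWeight_mul_eigenvalues (hA : A.IsHermitian) (hr : Function.Surjective r)
    (hA1 : ∀ k l, r k = r l → A k l = 1) (m : ι) :
    ∑ i, fiberWeight r hA i m * hA.eigenvalues i = fiberCard r m := by
  have h := hA.dotProduct_mulVec_eq_sum (fiberIndicator r m) (fiberIndicator r m)
  simp_rw [fiberIndicator_dotProduct_mulVec hA1, dotProduct_comm (fiberIndicator r m)] at h
  have hd := (fiberCard_pos hr m).ne'
  simp_rw [fiberWeight, div_mul_eq_mul_div, ← Finset.sum_div]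
  rw [div_eq_iff hd, ← sq, h]
  exact Finset.sum_congr rfl fun i _ => by ring

lemma Matrix.PosSemidef.sum_fiberWeight_eq_one_of_eigenvalues_ne_zero [Fintype ι]
    (hA : A.PosSemidef) (hA1 : ∀ k l, r k = r l → A k l = 1) {i : n} (hi : hA.1.eigenvalues i ≠ 0) :
    ∑ m, fiberWeight r hA.1 i m = 1 := by
  have hv : (⇑(hA.1.eigenvectorBasis i)).FactorsThrough r := fun k k' h => by
    have := hA.mulVec_factorsThrough hA1 (hA.1.eigenvectorBasis i) h
    rw [hA.1.mulVec_eigenvectorBasis] at this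
    exact mul_left_cancel₀ hi this
  simp_rw [fiberWeight]
  rw [sum_sq_dotProduct_fiberIndicator_div hv, hA.1.eigenvectorBasis_dotProduct_self]

lemma Matrix.PosSemidef.sum_fiberCard_mul_log_le [Fintype ι] (hA : A.PosSemidef)
    (hr : Function.Surjective r) (hA1 : ∀ k l, r k = r l → A k l = 1) :
    ∑ m, fiberCard r m * log (fiberCard r m)
      ≤ ∑ i, hA.1.eigenvalues i * log (hA.1.eigenvalues i) :=
  Real.sum_mul_log_le_of_weights hA.eigenvalues_nonneg (fiberWeight_nonneg hA.1 hr)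
    (sum_fiberWeight_eq_one hA.1 hr) (sum_fiberWeight_mul_eigenvalues hA.1 hr hA1)
    fun _ => hA.sum_fiberWeight_eq_one_of_eigenvalues_ne_zero hA1

lemma Matrix.PosSemidef.sum_mul_log_eigenvalues_eq_iff [Fintype ι] (hA : A.PosSemidef)
    (hr : Function.Surjective r) (hA1 : ∀ k l, r k = r l → A k l = 1) :
    ∑ i, hA.1.eigenvalues i * log (hA.1.eigenvalues i) = ∑ m, fiberCard r m * log (fiberCard r m)
      ↔ ∀ m, A *ᵥ fiberIndicator r m = fiberCard r m • fiberIndicator r m := by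
  rw [Real.sum_mul_log_eq_iff_of_weights hA.eigenvalues_nonneg (fiberWeight_nonneg hA.1 hr)
    (sum_fiberWeight_eq_one hA.1 hr) (sum_fiberWeight_mul_eigenvalues hA.1 hr hA1)
    fun _ => hA.sum_fiberWeight_eq_one_of_eigenvalues_ne_zero hA1, forall_comm]
  simp only [hA.1.mulVec_eq_smul_iff, fiberWeight_ne_zero_iff hA.1 hr]

end Fibers

/-- Given a partition of `{1,…,L}` into fibers of `r : Fin L → Fin M` and the 0/1 matrix `Q`
with `Q_{kl} = 1` iff `r k = r l`, the unique minimizer of the von Neumann entropy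
`S(X) = Tr(X log X) − Tr X` over symmetric PSD matrices `X` whose principal submatrices on
each fiber are all-ones (`X_{kl} = 1` whenever `r k = r l`) is `X = Q`. -/
theorem stmt11 {L M : ℕ} (r : Fin L → Fin M) (hr : Function.Surjective r)
    (Q : Matrix (Fin L) (Fin L) ℝ)
    (hQ : ∀ k l, Q k l = if r k = r l then 1 else 0)
    (hQpsd : Q.PosSemidef)
    (X : Matrix (Fin L) (Fin L) ℝ) (hX : X.PosSemidef)
    (hconstr : ∀ k l, r k = r l → X k l = 1) :
    ((Q * hQpsd.1.cfc Real.log).trace - Q.trace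
        ≤ (X * hX.1.cfc Real.log).trace - X.trace) ∧
    ((Q * hQpsd.1.cfc Real.log).trace - Q.trace
        = (X * hX.1.cfc Real.log).trace - X.trace → X = Q) := by
  have hQ1 : ∀ k l, r k = r l → Q k l = 1 := fun k l h => by simp [hQ, h]
  have htrace : X.trace = Q.trace := by simp [trace, hconstr, hQ]
  have hQentropy := (hQpsd.sum_mul_log_eigenvalues_eq_iff hr hQ1).mpr
    (mulVec_fiberIndicator_of_apply_eq_ite hQ)
  rw [hQpsd.1.trace_mul_cfc, hX.1.trace_mul_cfc, htrace, hQentropy]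
  refine ⟨by linarith [hX.sum_fiberCard_mul_log_le hr hconstr], fun h => ?_⟩
  have hXentropy := (hX.sum_mul_log_eigenvalues_eq_iff hr hconstr).mp (by linarith)
  ext k l
  rw [hX.apply_eq_ite_of_mulVec_fiberIndicator hconstr hXentropy, hQ]
end
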